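/- Let p be a nonzero prime ideal of O_K with absolute norm N(p) = q and let ℓ ≥ 1. Let P be a subset of L_ℓ^n, and let 𝒞 = {C_i}_{i=0}^{ℓ-1} be a family of q-ary codes where C_i is an (n, M_i, d_{C_i})-code over the alphabet set S_i containing the zero codeword and d_{C_i} ≥ ⌈ d_E(P)² / d_E(L_i)² ⌉ for each 0 ≤ i ≤ ℓ-1. Then the packing density of τ(𝒞) + P as a packing in ℝ^{mn} is at least Δ(P)·∏_{i=0}^{ℓ-1} M_i. -/

import Mathlib

open scoped BigOperators
open MeasureTheory

noncomputable section

/-- The index set for `ℝ^{s+2t}`: `s` real coordinates and `t` pairs of coordinates. -/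
abbrev PackIdx (s t : ℕ) := Fin s ⊕ Fin t × Fin 2

/-- The canonical embedding `τ : K → ℝ^{s+2t}`,
`τ(α) = (ρ₁(α),…,ρ_s(α), √2·Re σ₁(α), √2·Im σ₁(α), …, √2·Re σ_t(α), √2·Im σ_t(α))`. -/
def tauEmb {K : Type*} [Field K] {s t : ℕ}
    (ρ : Fin s → (K →+* ℝ)) (σ : Fin t → (K →+* ℂ)) (α : K) :
    EuclideanSpace ℝ (PackIdx s t) :=
  (EuclideanSpace.equiv (PackIdx s t) ℝ).symm <|
    Sum.elim (fun i => ρ i α)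
      (fun p => if p.2 = (0 : Fin 2) then Real.sqrt 2 * (σ p.1 α).re
                else Real.sqrt 2 * (σ p.1 α).im)

/-- The system of `s + 2t` field embeddings `K → ℂ` determined by the data `ρ, σ`:
the real embeddings `ρᵢ` and the complex embeddings `σⱼ` together with their conjugates. -/
def embSystem {K : Type*} [Field K] {s t : ℕ}
    (ρ : Fin s → (K →+* ℝ)) (σ : Fin t → (K →+* ℂ)) : PackIdx s t → (K →+* ℂ) :=
  Sum.elim (fun i => Complex.ofRealHom.comp (ρ i))
    (fun p => if p.2 = (0 : Fin 2) then σ p.1 else (starRingEnd ℂ).comp (σ p.1))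

/-- `ρ, σ` list exactly the real embeddings and the pairs of complex-conjugate embeddings
of `K`, without repetition: the associated system of `s+2t` embeddings `K → ℂ` is a
bijective enumeration of all field embeddings `K → ℂ`. -/
def IsEmbSystem {K : Type*} [Field K] {s t : ℕ}
    (ρ : Fin s → (K →+* ℝ)) (σ : Fin t → (K →+* ℂ)) : Prop :=
  Function.Bijective (embSystem ρ σ)

/-- The minimum (infimal) Euclidean distance between two distinct points of `P`. -/
def minDist {E : Type*} [MetricSpace E] (P : Set E) : ℝ :=
  sInf {d : ℝ | ∃ x ∈ P, ∃ y ∈ P, x ≠ y ∧ dist x y = d}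

/-- The volume `V_N` of the unit ball in `ℝ^N` (with index set `ι`, `N = |ι|`). -/
def unitBallVol (ι : Type*) [Fintype ι] : ℝ :=
  (volume (Metric.ball (0 : EuclideanSpace ℝ ι) 1)).toReal

/-- The packing density
`Δ(P) = limsup_{R→∞} |P ∩ B(R)| · r^N · V_N / vol(B(R+r))`, where `r = d_E(P)/2`. -/
def packDensity {ι : Type*} [Fintype ι] (P : Set (EuclideanSpace ℝ ι)) : ℝ :=
  Filter.limsup (fun R : ℝ =>
    (Nat.card (P ∩ Metric.closedBall 0 R : Set (EuclideanSpace ℝ ι)) : ℝ) *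
      (minDist P / 2) ^ (Fintype.card ι) * unitBallVol ι /
      (volume (Metric.closedBall (0 : EuclideanSpace ℝ ι) (R + minDist P / 2))).toReal)
    Filter.atTop

/-- `L_I = τ(I)`, the image in `ℝ^{s+2t}` of an ideal `I` of the ring of integers under the
canonical embedding. -/
def idealImage {K : Type*} [Field K] [NumberField K] {s t : ℕ}
    (ρ : Fin s → (K →+* ℝ)) (σ : Fin t → (K →+* ℂ))
    (I : Ideal (NumberField.RingOfIntegers K)) : Set (EuclideanSpace ℝ (PackIdx s t)) :=
  (fun a : NumberField.RingOfIntegers K =>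
    tauEmb ρ σ (algebraMap (NumberField.RingOfIntegers K) K a)) '' (I : Set _)

/-- The coordinatewise extension `τ : K^n → ℝ^{mn}`. -/
def tauEmbN {K : Type*} [Field K] {s t : ℕ} {n : ℕ}
    (ρ : Fin s → (K →+* ℝ)) (σ : Fin t → (K →+* ℂ)) (c : Fin n → K) :
    EuclideanSpace ℝ (Fin n × PackIdx s t) :=
  (EuclideanSpace.equiv (Fin n × PackIdx s t) ℝ).symm fun p => tauEmb ρ σ (c p.1) p.2

/-- The Cartesian product `L^n ⊆ ℝ^{mn}` of `n` copies of `L ⊆ ℝ^m`. -/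
def prodSet {ι : Type*} (n : ℕ) (L : Set (EuclideanSpace ℝ ι)) :
    Set (EuclideanSpace ℝ (Fin n × ι)) :=
  {x | ∀ j : Fin n,
    ((EuclideanSpace.equiv ι ℝ).symm fun i => (EuclideanSpace.equiv (Fin n × ι) ℝ) x (j, i)) ∈ L}

/-- `S` is a valid alphabet set at level `i`: a set of `q` elements of `p^i` containing `0`
whose residues modulo `p^{i+1}` represent the `q` distinct elements of `p^i/p^{i+1}`. -/
def IsRepSet {K : Type*} [Field K] [NumberField K]
    (p : Ideal (NumberField.RingOfIntegers K)) (i q : ℕ)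
    (S : Set (NumberField.RingOfIntegers K)) : Prop :=
  S ⊆ (p ^ i : Ideal (NumberField.RingOfIntegers K)) ∧ (0 : NumberField.RingOfIntegers K) ∈ S ∧
    Nat.card S = q ∧
    (∀ x ∈ S, ∀ y ∈ S, x ≠ y → x - y ∉ (p ^ (i + 1) : Ideal (NumberField.RingOfIntegers K))) ∧
    (∀ z ∈ (p ^ i : Ideal (NumberField.RingOfIntegers K)), ∃ a ∈ S,
      z - a ∈ (p ^ (i + 1) : Ideal (NumberField.RingOfIntegers K)))

/-- Hamming distance between two words. -/
def hDist {n : ℕ} {A : Type*} (u v : Fin n → A) : ℕ := Nat.card {j : Fin n // u j ≠ v j}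

/-- The minimum Hamming distance of a code `C`. -/
def codeMinDist {n : ℕ} {A : Type*} (C : Set (Fin n → A)) : ℕ :=
  sInf {d : ℕ | ∃ u ∈ C, ∃ v ∈ C, u ≠ v ∧ hDist u v = d}

/-- `C` is an `(n, M, d)`-code over the alphabet set `S`. -/
def IsCode {A : Type*} {n : ℕ} (S : Set A) (M d : ℕ) (C : Set (Fin n → A)) : Prop :=
  (∀ c ∈ C, ∀ j, c j ∈ S) ∧ Nat.card C = M ∧ codeMinDist C = d

/-- The translate `τ(c) + P` of `P` by the embedded codeword `c`. -/
def wordTranslate {K : Type*} [Field K] [NumberField K] {s t n : ℕ}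
    (ρ : Fin s → (K →+* ℝ)) (σ : Fin t → (K →+* ℂ))
    (c : Fin n → NumberField.RingOfIntegers K)
    (P : Set (EuclideanSpace ℝ (Fin n × PackIdx s t))) :
    Set (EuclideanSpace ℝ (Fin n × PackIdx s t)) :=
  {z | ∃ x ∈ P, z = tauEmbN ρ σ (fun j => algebraMap (NumberField.RingOfIntegers K) K (c j)) + x}

/-- The concatenation `τ(C) + P = { τ(c) + p : c ∈ C, p ∈ P }`. -/
def codeTranslate {K : Type*} [Field K] [NumberField K] {s t n : ℕ}
    (ρ : Fin s → (K →+* ℝ)) (σ : Fin t → (K →+* ℂ))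
    (C : Set (Fin n → NumberField.RingOfIntegers K))
    (P : Set (EuclideanSpace ℝ (Fin n × PackIdx s t))) :
    Set (EuclideanSpace ℝ (Fin n × PackIdx s t)) :=
  {z | ∃ c ∈ C, ∃ x ∈ P,
    z = tauEmbN ρ σ (fun j => algebraMap (NumberField.RingOfIntegers K) K (c j)) + x}

/-- The concatenation `τ(𝒞) + P = { Σ_{i<ℓ} τ(cᵢ) + p : cᵢ ∈ Cᵢ, p ∈ P }` of a family of codes. -/
def famTranslate {K : Type*} [Field K] [NumberField K] {s t n ℓ : ℕ}
    (ρ : Fin s → (K →+* ℝ)) (σ : Fin t → (K →+* ℂ))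
    (C : Fin ℓ → Set (Fin n → NumberField.RingOfIntegers K))
    (P : Set (EuclideanSpace ℝ (Fin n × PackIdx s t))) :
    Set (EuclideanSpace ℝ (Fin n × PackIdx s t)) :=
  {z | ∃ c : Fin ℓ → (Fin n → NumberField.RingOfIntegers K), (∀ i, c i ∈ C i) ∧ ∃ x ∈ P,
    z = (∑ i : Fin ℓ,
      tauEmbN ρ σ (fun j => algebraMap (NumberField.RingOfIntegers K) K (c i j))) + x}


/-!
Write a point of `τ(𝒞) + P` as `τ(∑ᵢ cᵢ + a)` with `cᵢ ∈ Cᵢ` and `a ∈ (p^ℓ)ⁿ`. If two such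
points come from codeword families that first differ at level `i₀`, then in every coordinate
where `c_{i₀}` and `c'_{i₀}` differ, the difference of the two integral vectors lies in
`p^{i₀} \ p^{i₀+1}`: the lower levels cancel, the higher ones and `a - a'` lie in `p^{i₀+1}`, and
`S_{i₀}` represents `p^{i₀}/p^{i₀+1}`. Each such coordinate contributes at least `d_E(L_{i₀})²` to
the squared distance, and there are at least `d_{C_{i₀}} ≥ d_E(P)²/d_E(L_{i₀})²` of them. Hence
`τ(𝒞) + P` is as separated as `P` (which it contains), and it is the disjoint union of
`∏ Mᵢ` translates of `P` by vectors of norm at most some `T`. So a ball of radius `R + T`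
contains at least `∏ Mᵢ` times as many of its points as the ball of radius `R` contains points
of `P`, and the shift by `T` does not matter as `R → ∞`.
-/

open NumberField Filter Metric Topology

lemma tendsto_add_div_add_atTop (a b : ℝ) :
    Tendsto (fun R : ℝ => (R + a) / (R + b)) atTop (𝓝 1) := by
  have hlim : Tendsto (fun R : ℝ => 1 + (a - b) / (R + b)) atTop (𝓝 (1 + 0)) :=
    tendsto_const_nhds.add <|
      tendsto_const_nhds.div_atTop (tendsto_atTop_add_const_right _ b tendsto_id)
  rw [add_zero] at hlim
  refine hlim.congr' ((eventually_gt_atTop (-b)).mono fun R hR => ?_)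
  field_simp [show R + b ≠ 0 by linarith]
  ring

lemma limsup_mul_le_limsup_of_le_comp_add {f g h : ℝ → ℝ} {k T : ℝ} (hk : 0 ≤ k)
    (hf : ∀ R, 0 ≤ f R) (hg : IsBoundedUnder (· ≤ ·) atTop g) (hh : Tendsto h atTop (𝓝 1))
    (hfg : ∀ᶠ R in atTop, k * f R * h R ≤ g (R + T)) :
    limsup f atTop * k ≤ limsup g atTop := by
  set L := limsup f atTop
  have hε : ∀ ε ∈ Set.Ioo (0 : ℝ) 1, (L - ε) * k * (1 - ε) ≤ limsup g atTop := by
    rintro ε ⟨hε0, hε1⟩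
    have hfreq : ∃ᶠ R in atTop, L - ε < f R :=
      frequently_lt_of_lt_limsup (isBoundedUnder_of ⟨0, hf⟩).isCoboundedUnder_le (by linarith)
    have hfreq' : ∃ᶠ R in atTop, (L - ε) * k * (1 - ε) ≤ g (R + T) := by
      have hh' : ∀ᶠ R in atTop, 1 - ε < h R := hh.eventually (lt_mem_nhds (by linarith))
      refine (hfreq.and_eventually (hfg.and hh')).mono ?_
      rintro R ⟨hfR, hgR, hhR⟩
      calc (L - ε) * k * (1 - ε) ≤ f R * k * (1 - ε) := by gcongr
        _ ≤ f R * k * h R := by gcongr; exact mul_nonneg (hf R) hk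
        _ = k * f R * h R := by ring
        _ ≤ g (R + T) := hgR
    exact le_limsup_of_frequently_le
      ((tendsto_atTop_add_const_right _ T tendsto_id).frequently hfreq') hg
  have hlim : Tendsto (fun ε : ℝ => (L - ε) * k * (1 - ε)) (𝓝[>] 0) (𝓝 (L * k)) := by
    have : Continuous fun ε : ℝ => (L - ε) * k * (1 - ε) := by fun_prop
    simpa using (this.tendsto 0).mono_left nhdsWithin_le_nhds
  exact le_of_tendsto hlim (eventually_of_mem (Ioo_mem_nhdsGT one_pos) hε)

section MinDist

variable {E : Type*} [MetricSpace E]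

lemma minDist_nonneg (P : Set E) : 0 ≤ minDist P :=
  Real.sInf_nonneg (by rintro d ⟨x, -, y, -, -, rfl⟩; exact dist_nonneg)

lemma minDist_le_dist {P : Set E} {x y : E} (hx : x ∈ P) (hy : y ∈ P) (hxy : x ≠ y) :
    minDist P ≤ dist x y :=
  csInf_le ⟨0, by rintro d ⟨a, -, b, -, -, rfl⟩; exact dist_nonneg⟩ ⟨x, hx, y, hy, hxy, rfl⟩

lemma minDist_le_minDist {P Q : Set E} (hPQ : P ⊆ Q)
    (hsep : ∀ x ∈ Q, ∀ y ∈ Q, x ≠ y → minDist P ≤ dist x y) : minDist P ≤ minDist Q := by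
  rcases Set.eq_empty_or_nonempty {d : ℝ | ∃ x ∈ Q, ∃ y ∈ Q, x ≠ y ∧ dist x y = d} with h | h
  -- no two distinct points in `Q`, hence none in `P`: both sides are `sInf ∅ = 0`
  · have hP : {d : ℝ | ∃ x ∈ P, ∃ y ∈ P, x ≠ y ∧ dist x y = d} = ∅ :=
      Set.eq_empty_of_subset_empty fun d ⟨x, hx, y, hy, hxy, hd⟩ =>
        h ▸ ⟨x, hPQ hx, y, hPQ hy, hxy, hd⟩
    simp only [minDist, h, hP, le_refl]
  · exact le_csInf h fun d ⟨x, hx, y, hy, hxy, hd⟩ => hd ▸ hsep x hx y hy hxy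

end MinDist

section Packing

variable {ι : Type*} [Fintype ι]

local notation "𝔼" => EuclideanSpace ℝ ι

lemma unitBallVol_pos : 0 < unitBallVol ι :=
  ENNReal.toReal_pos (measure_ball_pos volume 0 one_pos).ne' measure_ball_lt_top.ne

lemma volume_real_closedBall {u : ℝ} (hu : 0 ≤ u) :
    (volume (closedBall (0 : 𝔼) u)).toReal = u ^ Fintype.card ι * unitBallVol ι := by
  rw [← measureReal_def, Measure.addHaar_real_closedBall _ _ hu, finrank_euclideanSpace]
  rfl

lemma card_mul_pow_le_of_pairwiseDisjoint {F : Finset 𝔼} {r R : ℝ} (hr : 0 ≤ r) (hR : 0 ≤ R)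
    (hF : ∀ x ∈ F, ‖x‖ ≤ R) (hdisj : (F : Set 𝔼).PairwiseDisjoint (ball · r)) :
    F.card * r ^ Fintype.card ι ≤ (R + r) ^ Fintype.card ι := by
  rcases isEmpty_or_nonempty ι with hι | hι
  · have : F.card ≤ 1 := Finset.card_le_one.mpr fun x _ y _ => Subsingleton.elim x y
    simpa using this
  have hunion : ⋃ x ∈ F, ball x r ⊆ closedBall (0 : 𝔼) (R + r) := by
    simp only [Set.iUnion_subset_iff]
    intro x hx y hy
    rw [mem_closedBall_zero_iff]
    calc ‖y‖ ≤ ‖x‖ + dist y x := by simpa [dist_eq_norm] using norm_le_norm_add_norm_sub' y x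
      _ ≤ R + r := add_le_add (hF x hx) (mem_ball.mp hy).le
  have hvol := measureReal_mono (μ := volume) hunion measure_closedBall_lt_top.ne
  have hball (x : 𝔼) : volume.real (ball x r) = r ^ Fintype.card ι * unitBallVol ι := by
    rw [← Measure.addHaar_real_closedBall_eq_addHaar_real_ball,
      Measure.addHaar_real_closedBall _ _ hr, finrank_euclideanSpace]
    rfl
  rw [measureReal_biUnion_finset hdisj fun _ _ => isOpen_ball.measurableSet,
    Finset.sum_congr rfl fun x _ => hball x, Finset.sum_const, nsmul_eq_mul,
    Measure.addHaar_real_closedBall _ _ (by linarith), finrank_euclideanSpace, ← mul_assoc] at hvol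
  exact le_of_mul_le_mul_right hvol unitBallVol_pos

def packRatio (A : Set 𝔼) (R : ℝ) : ℝ :=
  (Nat.card ↥(A ∩ closedBall 0 R) : ℝ) * (minDist A / 2) ^ Fintype.card ι * unitBallVol ι /
    (volume (closedBall (0 : 𝔼) (R + minDist A / 2))).toReal

lemma packDensity_eq_limsup (A : Set 𝔼) : packDensity A = limsup (packRatio A) atTop := rfl

lemma packRatio_nonneg (A : Set 𝔼) (R : ℝ) : 0 ≤ packRatio A R := by
  have := minDist_nonneg A
  exact div_nonneg (mul_nonneg (by positivity) ENNReal.toReal_nonneg) ENNReal.toReal_nonneg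

lemma packRatio_eq (A : Set 𝔼) {R : ℝ} (hR : 0 ≤ R + minDist A / 2) :
    packRatio A R = Nat.card ↥(A ∩ closedBall 0 R) * (minDist A / 2) ^ Fintype.card ι /
      (R + minDist A / 2) ^ Fintype.card ι := by
  rw [packRatio, volume_real_closedBall hR, mul_div_mul_right _ _ unitBallVol_pos.ne']

lemma packRatio_le_one (A : Set 𝔼) {R : ℝ} (hR : 0 ≤ R) : packRatio A R ≤ 1 := by
  have hr := minDist_nonneg A
  rw [packRatio_eq A (by positivity)]
  rcases (A ∩ closedBall 0 R).finite_or_infinite with hfin | hinf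
  · refine div_le_one_of_le₀ ?_ (by positivity)
    rw [Nat.card_eq_card_finite_toFinset hfin]
    refine card_mul_pow_le_of_pairwiseDisjoint (by positivity) hR (fun x hx => ?_) ?_
    · simpa using ((Set.Finite.mem_toFinset hfin).mp hx).2
    · intro x hx y hy hxy
      simp only [Set.Finite.coe_toFinset] at hx hy
      exact ball_disjoint_ball (by linarith [minDist_le_dist hx.1 hy.1 hxy])
  -- `Nat.card` of an infinite set is `0`
  · simp [hinf.ncard, Nat.card_coe_set_eq]

lemma isBoundedUnder_packRatio (A : Set 𝔼) : IsBoundedUnder (· ≤ ·) atTop (packRatio A) :=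
  isBoundedUnder_of_eventually_le (eventually_ge_atTop 0 |>.mono fun _ => packRatio_le_one A)

lemma packDensity_nonneg (A : Set 𝔼) : 0 ≤ packDensity A :=
  le_limsup_of_frequently_le (Frequently.of_forall (packRatio_nonneg A))
    (isBoundedUnder_packRatio A)

lemma card_mul_card_inter_closedBall_le {P Q : Set 𝔼} {A : Type*} [Finite A] (v : A → 𝔼)
    {T R : ℝ} (hT : ∀ a, ‖v a‖ ≤ T) (hvQ : ∀ a, ∀ x ∈ P, v a + x ∈ Q)
    (hinj : ∀ a a', ∀ x ∈ P, ∀ x' ∈ P, v a + x = v a' + x' → a = a' ∧ x = x')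
    (hQfin : (Q ∩ closedBall 0 (R + T)).Finite) :
    Nat.card A * Nat.card ↥(P ∩ closedBall 0 R) ≤ Nat.card ↥(Q ∩ closedBall 0 (R + T)) := by
  have := hQfin.to_subtype
  rw [← Nat.card_prod]
  refine Nat.card_le_card_of_injective
    (fun ax => ⟨v ax.1 + ax.2, hvQ _ _ ax.2.2.1, mem_closedBall_zero_iff.mpr ?_⟩) ?_
  · calc ‖v ax.1 + ax.2‖ ≤ ‖v ax.1‖ + ‖(ax.2 : 𝔼)‖ := norm_add_le _ _
      _ ≤ R + T := by linarith [hT ax.1, mem_closedBall_zero_iff.mp ax.2.2.2]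
  · rintro ⟨a, x⟩ ⟨a', x'⟩ h
    obtain ⟨rfl, hx⟩ := hinj a a' x x.2.1 x' x'.2.1 (congrArg Subtype.val h)
    rw [Subtype.ext hx]

lemma mul_packRatio_mul_le_packRatio {P Q : Set 𝔼} {k T R : ℝ} (hR : 0 < R) (hT : 0 ≤ T)
    (hr : minDist P ≤ minDist Q)
    (hcount : k * Nat.card ↥(P ∩ closedBall 0 R) ≤ Nat.card ↥(Q ∩ closedBall 0 (R + T))) :
    k * packRatio P R * ((R + minDist P / 2) / (R + T + minDist Q / 2)) ^ Fintype.card ι ≤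
      packRatio Q (R + T) := by
  have hrP : 0 ≤ minDist P / 2 := by have := minDist_nonneg P; positivity
  have hrQ : 0 ≤ minDist Q / 2 := by have := minDist_nonneg Q; positivity
  have hP : 0 < R + minDist P / 2 := by positivity
  have hQ : 0 < R + T + minDist Q / 2 := by positivity
  rw [packRatio_eq P hP.le, packRatio_eq Q hQ.le, div_pow (R + minDist P / 2)]
  calc k * (Nat.card ↥(P ∩ closedBall 0 R) * (minDist P / 2) ^ Fintype.card ι /
          (R + minDist P / 2) ^ Fintype.card ι) *
        ((R + minDist P / 2) ^ Fintype.card ι / (R + T + minDist Q / 2) ^ Fintype.card ι)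
      = k * Nat.card ↥(P ∩ closedBall 0 R) * (minDist P / 2) ^ Fintype.card ι /
          (R + T + minDist Q / 2) ^ Fintype.card ι := by
        rw [mul_assoc, div_mul_div_cancel₀ (pow_pos hP _).ne']
        ring
    _ ≤ _ := by gcongr

theorem packDensity_mul_card_le {P Q : Set 𝔼} {A : Type*} (v : A → 𝔼)
    (hvQ : ∀ a, ∀ x ∈ P, v a + x ∈ Q)
    (hinj : ∀ a a', ∀ x ∈ P, ∀ x' ∈ P, v a + x = v a' + x' → a = a' ∧ x = x')
    (hr : minDist P ≤ minDist Q) (hQfin : ∀ R, (Q ∩ closedBall 0 R).Finite) :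
    packDensity P * Nat.card A ≤ packDensity Q := by
  cases finite_or_infinite A with
  | inr => simpa using packDensity_nonneg Q -- `Nat.card A = 0`
  | inl =>
  obtain ⟨T, hT0, hT⟩ : ∃ T, 0 ≤ T ∧ ∀ a, ‖v a‖ ≤ T := by
    obtain ⟨T, hT⟩ := (Set.finite_range fun a => ‖v a‖).bddAbove
    exact ⟨max T 0, le_max_right _ _, fun a => (hT ⟨a, rfl⟩).trans (le_max_left _ _)⟩
  have hratio : Tendsto (fun R => ((R + minDist P / 2) / (R + T + minDist Q / 2)) ^ Fintype.card ι)
      atTop (𝓝 1) := by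
    simpa [add_assoc] using (tendsto_add_div_add_atTop (minDist P / 2) (T + minDist Q / 2)).pow _
  rw [packDensity_eq_limsup, packDensity_eq_limsup]
  refine limsup_mul_le_limsup_of_le_comp_add (T := T) (Nat.cast_nonneg _) (packRatio_nonneg P)
    (isBoundedUnder_packRatio Q) hratio ((eventually_gt_atTop 0).mono fun R hR => ?_)
  refine mul_packRatio_mul_le_packRatio hR hT0 hr ?_
  exact_mod_cast card_mul_card_inter_closedBall_le v hT hvQ hinj (hQfin _)

end Packing

section CanonicalEmbedding

variable {K : Type*} [Field K] {s t : ℕ} (ρ : Fin s → (K →+* ℝ)) (σ : Fin t → (K →+* ℂ))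

lemma tauEmb_add (α β : K) : tauEmb ρ σ (α + β) = tauEmb ρ σ α + tauEmb ρ σ β := by
  ext (i | ⟨j, k⟩)
  · simp [tauEmb]
  · fin_cases k <;> simp [tauEmb, mul_add]

lemma tauEmb_zero : tauEmb ρ σ (0 : K) = 0 := by
  simpa using tauEmb_add ρ σ 0 0

lemma tauEmb_sub (α β : K) : tauEmb ρ σ (α - β) = tauEmb ρ σ α - tauEmb ρ σ β := by
  rw [eq_sub_iff_add_eq, ← tauEmb_add, sub_add_cancel]

lemma norm_sq_tauEmbN {n : ℕ} (c : Fin n → K) :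
    ‖tauEmbN ρ σ c‖ ^ 2 = ∑ j, ‖tauEmb ρ σ (c j)‖ ^ 2 := by
  simp [EuclideanSpace.norm_sq_eq, Fintype.sum_prod_type, tauEmbN]

def tauEmbIntN (n : ℕ) : (Fin n → 𝓞 K) →+ EuclideanSpace ℝ (Fin n × PackIdx s t) :=
  AddMonoidHom.mk' (fun w => tauEmbN ρ σ fun j => algebraMap (𝓞 K) K (w j)) fun u v => by
    ext ⟨j, i⟩
    simp [tauEmbN, tauEmb_add]

lemma tauEmbIntN_apply {n : ℕ} (w : Fin n → 𝓞 K) :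
    tauEmbIntN ρ σ n w = tauEmbN ρ σ fun j => algebraMap (𝓞 K) K (w j) := rfl

lemma norm_sq_tauEmbIntN {n : ℕ} (w : Fin n → 𝓞 K) :
    ‖tauEmbIntN ρ σ n w‖ ^ 2 = ∑ j, ‖tauEmb ρ σ (algebraMap (𝓞 K) K (w j))‖ ^ 2 := by
  rw [tauEmbIntN_apply, norm_sq_tauEmbN]

variable {ρ σ} (hemb : Function.Surjective (embSystem ρ σ))
include hemb

lemma norm_le_norm_tauEmb (φ : K →+* ℂ) (x : K) : ‖φ x‖ ≤ ‖tauEmb ρ σ x‖ := by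
  obtain ⟨idx, rfl⟩ := hemb φ
  refine (sq_le_sq₀ (norm_nonneg _) (norm_nonneg _)).mp ?_
  rw [EuclideanSpace.real_norm_sq_eq]
  rcases idx with i | ⟨j, k⟩
  · have : ‖embSystem ρ σ (Sum.inl i) x‖ ^ 2 = tauEmb ρ σ x (Sum.inl i) ^ 2 := by
      simp [embSystem, tauEmb, sq_abs]
    exact this ▸ Finset.single_le_sum (f := fun i => tauEmb ρ σ x i ^ 2)
      (fun _ _ => sq_nonneg _) (Finset.mem_univ _)
  · have hpair : tauEmb ρ σ x (Sum.inr (j, 0)) ^ 2 + tauEmb ρ σ x (Sum.inr (j, 1)) ^ 2 =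
        2 * ‖σ j x‖ ^ 2 := by
      simp [tauEmb, mul_pow, Complex.sq_norm, Complex.normSq_apply]
      ring
    have hconj : ‖embSystem ρ σ (Sum.inr (j, k)) x‖ = ‖σ j x‖ := by
      simp only [embSystem, Sum.elim_inr]
      split <;> simp
    calc ‖embSystem ρ σ (Sum.inr (j, k)) x‖ ^ 2
        ≤ tauEmb ρ σ x (Sum.inr (j, 0)) ^ 2 + tauEmb ρ σ x (Sum.inr (j, 1)) ^ 2 := by
          rw [hpair, hconj]; linarith [sq_nonneg ‖σ j x‖]
      _ ≤ ∑ i, tauEmb ρ σ x i ^ 2 :=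
          Finset.add_le_sum (fun _ _ => sq_nonneg _) (Finset.mem_univ _) (Finset.mem_univ _)
            (by simp)

variable [NumberField K]

lemma one_le_norm_tauEmb {a : 𝓞 K} (ha : a ≠ 0) : 1 ≤ ‖tauEmb ρ σ (algebraMap (𝓞 K) K a)‖ := by
  obtain ⟨φ, hφ⟩ := NumberField.exists_conjugate_one_le_norm ha
  exact hφ.trans (norm_le_norm_tauEmb hemb φ _)

lemma finite_setOf_norm_tauEmb_le (R : ℝ) :
    {a : 𝓞 K | ‖tauEmb ρ σ (algebraMap (𝓞 K) K a)‖ ≤ R}.Finite := by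
  refine Set.Finite.of_finite_image ?_ RingOfIntegers.coe_injective.injOn
  refine (Embeddings.finite_of_norm_le K ℂ R).subset ?_
  rintro _ ⟨a, ha, rfl⟩
  exact ⟨RingOfIntegers.isIntegral_coe a, fun φ => (norm_le_norm_tauEmb hemb φ _).trans ha⟩

lemma finite_range_tauEmbIntN_inter_closedBall (n : ℕ) (R : ℝ) :
    (Set.range (tauEmbIntN ρ σ n) ∩ closedBall 0 R).Finite := by
  refine ((Set.Finite.pi fun _ => finite_setOf_norm_tauEmb_le hemb R).image
    (tauEmbIntN ρ σ n)).subset ?_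
  rintro _ ⟨⟨w, rfl⟩, hw⟩
  refine ⟨w, fun j _ => ?_, rfl⟩
  have hsq : ‖tauEmb ρ σ (algebraMap (𝓞 K) K (w j))‖ ^ 2 ≤ ‖tauEmbIntN ρ σ n w‖ ^ 2 := by
    rw [norm_sq_tauEmbIntN]
    exact Finset.single_le_sum (f := fun j => ‖tauEmb ρ σ (algebraMap (𝓞 K) K (w j))‖ ^ 2)
      (fun _ _ => sq_nonneg _) (Finset.mem_univ j)
  exact ((sq_le_sq₀ (norm_nonneg _) (norm_nonneg _)).mp hsq).trans (mem_closedBall_zero_iff.mp hw)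

lemma tauEmb_algebraMap_ne_zero {a : 𝓞 K} (ha : a ≠ 0) : tauEmb ρ σ (algebraMap (𝓞 K) K a) ≠ 0 :=
  norm_pos_iff.mp (one_pos.trans_le (one_le_norm_tauEmb hemb ha))

lemma one_le_minDist_idealImage {I : Ideal (𝓞 K)} (hI : I ≠ ⊥) :
    1 ≤ minDist (idealImage ρ σ I) := by
  obtain ⟨w, hwI, hw0⟩ := Submodule.exists_mem_ne_zero_of_ne_bot hI
  refine le_csInf ⟨_, _, ⟨w, hwI, rfl⟩, _, ⟨0, I.zero_mem, rfl⟩, ?_, rfl⟩ ?_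
  · simpa [tauEmb_zero] using tauEmb_algebraMap_ne_zero hemb hw0
  · rintro _ ⟨_, ⟨a, -, rfl⟩, _, ⟨b, -, rfl⟩, hab, rfl⟩
    rw [dist_eq_norm, ← tauEmb_sub, ← map_sub]
    exact one_le_norm_tauEmb hemb (sub_ne_zero.mpr fun h => hab (h ▸ rfl))

lemma minDist_idealImage_le_norm {I : Ideal (𝓞 K)} {β : 𝓞 K} (hβI : β ∈ I) (hβ : β ≠ 0) :
    minDist (idealImage ρ σ I) ≤ ‖tauEmb ρ σ (algebraMap (𝓞 K) K β)‖ := by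
  have h := minDist_le_dist (P := idealImage ρ σ I) ⟨β, hβI, rfl⟩ ⟨0, I.zero_mem, rfl⟩
    (by simpa [tauEmb_zero] using tauEmb_algebraMap_ne_zero hemb hβ)
  simpa [tauEmb_zero] using h

lemma card_mul_minDist_sq_le_norm_sq {I : Ideal (𝓞 K)} {n : ℕ} {β : Fin n → 𝓞 K}
    (hβ : ∀ j, β j ∈ I) :
    Nat.card {j // β j ≠ 0} * minDist (idealImage ρ σ I) ^ 2 ≤ ‖tauEmbIntN ρ σ n β‖ ^ 2 := by
  classical
  rw [Nat.card_eq_fintype_card, Fintype.card_subtype, norm_sq_tauEmbIntN, ← nsmul_eq_mul,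
    ← Finset.sum_const]
  calc ∑ _j ∈ {j | β j ≠ 0}, minDist (idealImage ρ σ I) ^ 2
      ≤ ∑ j ∈ {j | β j ≠ 0}, ‖tauEmb ρ σ (algebraMap (𝓞 K) K (β j))‖ ^ 2 :=
        Finset.sum_le_sum fun j hj => pow_le_pow_left₀ (minDist_nonneg _)
          (minDist_idealImage_le_norm hemb (hβ j) (Finset.mem_filter.mp hj).2) 2
    _ ≤ ∑ j, ‖tauEmb ρ σ (algebraMap (𝓞 K) K (β j))‖ ^ 2 :=
        Finset.sum_le_sum_of_subset_of_nonneg (Finset.filter_subset _ _)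
          fun _ _ _ => sq_nonneg _

end CanonicalEmbedding

lemma sum_add_sub_mem_pow_succ {R : Type*} [CommRing R] {p : Ideal R} {ℓ : ℕ} {x : Fin ℓ → R}
    (hx : ∀ i : Fin ℓ, x i ∈ p ^ (i : ℕ)) {i₀ : Fin ℓ} (hlt : ∀ i < i₀, x i = 0) {y : R}
    (hy : y ∈ p ^ ℓ) : ∑ i, x i + y - x i₀ ∈ p ^ ((i₀ : ℕ) + 1) := by
  rw [← Finset.add_sum_erase _ _ (Finset.mem_univ i₀), add_assoc, add_sub_cancel_left]
  refine add_mem (Ideal.sum_mem _ fun i hi => ?_) (Ideal.pow_le_pow_right i₀.isLt hy)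
  rcases lt_or_gt_of_ne (Finset.ne_of_mem_erase hi) with h | h
  · simp [hlt i h]
  · exact Ideal.pow_le_pow_right h (hx i)

lemma one_le_hDist {n : ℕ} {A : Type*} {u v : Fin n → A} (h : u ≠ v) : 1 ≤ hDist u v :=
  have ⟨j, hj⟩ := Function.ne_iff.mp h
  Nat.card_pos_iff.mpr ⟨⟨⟨j, hj⟩⟩, inferInstance⟩

lemma codeMinDist_le_hDist {n : ℕ} {A : Type*} {C : Set (Fin n → A)} {u v : Fin n → A}
    (hu : u ∈ C) (hv : v ∈ C) (huv : u ≠ v) : codeMinDist C ≤ hDist u v :=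
  Nat.sInf_le ⟨u, hu, v, hv, huv, rfl⟩

section Concatenation

variable {K : Type*} [Field K] [NumberField K] {s t n ℓ : ℕ}
  {ρ : Fin s → (K →+* ℝ)} {σ : Fin t → (K →+* ℂ)} {p : Ideal (𝓞 K)} {S : ℕ → Set (𝓞 K)}
  {P : Set (EuclideanSpace ℝ (Fin n × PackIdx s t))}

lemma exists_tauEmbIntN_eq_of_mem_prodSet {I : Ideal (𝓞 K)}
    {x : EuclideanSpace ℝ (Fin n × PackIdx s t)} (hx : x ∈ prodSet n (idealImage ρ σ I)) :
    ∃ a : Fin n → 𝓞 K, (∀ j, a j ∈ I) ∧ tauEmbIntN ρ σ n a = x := by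
  choose a ha hax using hx
  refine ⟨a, ha, ?_⟩
  ext ⟨j, i⟩
  exact congrArg (· i) (hax j)

lemma subset_famTranslate {C : Fin ℓ → Set (Fin n → 𝓞 K)} (h0C : ∀ i, (fun _ => 0) ∈ C i) :
    P ⊆ famTranslate ρ σ C P :=
  fun x hx => ⟨0, h0C, x, hx, show x = ∑ _i : Fin ℓ, tauEmbIntN ρ σ n 0 + x by simp⟩

lemma famTranslate_subset_range (hP : P ⊆ prodSet n (idealImage ρ σ (p ^ ℓ)))
    (C : Fin ℓ → Set (Fin n → 𝓞 K)) : famTranslate ρ σ C P ⊆ Set.range (tauEmbIntN ρ σ n) := by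
  rintro _ ⟨c, -, x, hx, rfl⟩
  obtain ⟨a, -, rfl⟩ := exists_tauEmbIntN_eq_of_mem_prodSet (hP hx)
  exact ⟨∑ i, c i + a, by rw [map_add, map_sum]; rfl⟩

variable (hemb : Function.Surjective (embSystem ρ σ))
  (hSsub : ∀ i : Fin ℓ, S i ⊆ (p ^ (i : ℕ) : Ideal (𝓞 K)))
  (hSsep : ∀ i : Fin ℓ, ∀ x ∈ S i, ∀ y ∈ S i, x ≠ y → x - y ∉ p ^ ((i : ℕ) + 1))
include hemb hSsub hSsep

lemma hDist_mul_minDist_sq_le_norm_sq {c c' : Fin ℓ → Fin n → 𝓞 K}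
    (hc : ∀ (i : Fin ℓ) j, c i j ∈ S i) (hc' : ∀ (i : Fin ℓ) j, c' i j ∈ S i)
    {a a' : Fin n → 𝓞 K} (ha : ∀ j, a j ∈ p ^ ℓ) (ha' : ∀ j, a' j ∈ p ^ ℓ)
    {i₀ : Fin ℓ} (hlt : ∀ i < i₀, c i = c' i) :
    hDist (c i₀) (c' i₀) * minDist (idealImage ρ σ (p ^ (i₀ : ℕ))) ^ 2 ≤
      ‖tauEmbIntN ρ σ n (∑ i, c i + a) - tauEmbIntN ρ σ n (∑ i, c' i + a')‖ ^ 2 := by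
  rw [← map_sub]
  set β := ∑ i, c i + a - (∑ i, c' i + a')
  have hlevel j : β j - (c i₀ j - c' i₀ j) ∈ p ^ ((i₀ : ℕ) + 1) := by
    have : β j = ∑ i, (c i j - c' i j) + (a j - a' j) := by
      simp only [β, Pi.sub_apply, Pi.add_apply, Finset.sum_apply, Finset.sum_sub_distrib]
      ring
    rw [this]
    exact sum_add_sub_mem_pow_succ (fun i => sub_mem (hSsub i (hc i j)) (hSsub i (hc' i j)))
      (fun i hi => by rw [hlt i hi, sub_self]) (sub_mem (ha j) (ha' j))
  have hβ j : β j ∈ p ^ (i₀ : ℕ) := by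
    simpa using add_mem (Ideal.pow_le_pow_right (Nat.le_succ _) (hlevel j))
      (sub_mem (hSsub i₀ (hc i₀ j)) (hSsub i₀ (hc' i₀ j)))
  have hsupp : hDist (c i₀) (c' i₀) ≤ Nat.card {j // β j ≠ 0} := by
    refine Nat.card_le_card_of_injective (fun j => ⟨j.1, fun h0 => ?_⟩)
      fun _ _ h => Subtype.ext (Subtype.mk.inj h)
    have := hlevel j.1
    rw [h0, zero_sub, neg_mem_iff] at this
    exact hSsep i₀ _ (hc i₀ j) _ (hc' i₀ j) j.2 this
  calc (hDist (c i₀) (c' i₀) : ℝ) * minDist (idealImage ρ σ (p ^ (i₀ : ℕ))) ^ 2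
      ≤ Nat.card {j // β j ≠ 0} * minDist (idealImage ρ σ (p ^ (i₀ : ℕ))) ^ 2 := by
        gcongr
    _ ≤ ‖tauEmbIntN ρ σ n β‖ ^ 2 := card_mul_minDist_sq_le_norm_sq hemb hβ

variable (hP : P ⊆ prodSet n (idealImage ρ σ (p ^ ℓ)))
include hP

lemma exists_hDist_mul_minDist_sq_le_dist_sq {c c' : Fin ℓ → Fin n → 𝓞 K}
    (hc : ∀ (i : Fin ℓ) j, c i j ∈ S i) (hc' : ∀ (i : Fin ℓ) j, c' i j ∈ S i) (hcc' : c ≠ c')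
    {x x' : EuclideanSpace ℝ (Fin n × PackIdx s t)} (hx : x ∈ P) (hx' : x' ∈ P) :
    ∃ i₀ : Fin ℓ, c i₀ ≠ c' i₀ ∧
      hDist (c i₀) (c' i₀) * minDist (idealImage ρ σ (p ^ (i₀ : ℕ))) ^ 2 ≤
        dist (∑ i, tauEmbIntN ρ σ n (c i) + x) (∑ i, tauEmbIntN ρ σ n (c' i) + x') ^ 2 := by
  obtain ⟨a, ha, rfl⟩ := exists_tauEmbIntN_eq_of_mem_prodSet (hP hx)
  obtain ⟨a', ha', rfl⟩ := exists_tauEmbIntN_eq_of_mem_prodSet (hP hx')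
  obtain ⟨i₀, hi₀, hmin⟩ :=
    WellFounded.has_min wellFounded_lt {i | c i ≠ c' i} (Function.ne_iff.mp hcc')
  refine ⟨i₀, hi₀, ?_⟩
  rw [dist_eq_norm, ← map_sum, ← map_add, ← map_sum, ← map_add]
  exact hDist_mul_minDist_sq_le_norm_sq hemb hSsub hSsep hc hc' ha ha' fun i hi =>
    not_not.mp fun h => hmin i h hi

variable (hp0 : p ≠ ⊥)
include hp0

lemma eq_and_eq_of_sum_tauEmbIntN_add_eq {c c' : Fin ℓ → Fin n → 𝓞 K}
    (hc : ∀ (i : Fin ℓ) j, c i j ∈ S i) (hc' : ∀ (i : Fin ℓ) j, c' i j ∈ S i)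
    {x x' : EuclideanSpace ℝ (Fin n × PackIdx s t)} (hx : x ∈ P) (hx' : x' ∈ P)
    (h : ∑ i, tauEmbIntN ρ σ n (c i) + x = ∑ i, tauEmbIntN ρ σ n (c' i) + x') :
    c = c' ∧ x = x' := by
  by_cases hcc' : c = c'
  · subst hcc'
    exact ⟨rfl, add_left_cancel h⟩
  obtain ⟨i₀, hne, hle⟩ :=
    exists_hDist_mul_minDist_sq_le_dist_sq hemb hSsub hSsep hP hc hc' hcc' hx hx'
  have hd : (1 : ℝ) ≤ hDist (c i₀) (c' i₀) := by exact_mod_cast one_le_hDist hne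
  have hb := one_le_minDist_idealImage (ρ := ρ) (σ := σ) hemb (pow_ne_zero (i₀ : ℕ) hp0)
  rw [h, dist_self] at hle
  nlinarith

lemma minDist_le_dist_of_mem_famTranslate {C : Fin ℓ → Set (Fin n → 𝓞 K)}
    (hCS : ∀ i, ∀ c ∈ C i, ∀ j, c j ∈ S i)
    (hd : ∀ i : Fin ℓ,
      ⌈minDist P ^ 2 / minDist (idealImage ρ σ (p ^ (i : ℕ))) ^ 2⌉₊ ≤ codeMinDist (C i))
    {z z' : EuclideanSpace ℝ (Fin n × PackIdx s t)} (hz : z ∈ famTranslate ρ σ C P)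
    (hz' : z' ∈ famTranslate ρ σ C P) (hzz' : z ≠ z') : minDist P ≤ dist z z' := by
  obtain ⟨c, hc, x, hx, rfl⟩ := hz
  obtain ⟨c', hc', x', hx', rfl⟩ := hz'
  by_cases hcc' : c = c'
  · subst hcc'
    rw [dist_add_left]
    exact minDist_le_dist hx hx' fun h => hzz' (h ▸ rfl)
  obtain ⟨i₀, hne, hle⟩ := exists_hDist_mul_minDist_sq_le_dist_sq hemb hSsub hSsep hP
    (fun i => hCS i _ (hc i)) (fun i => hCS i _ (hc' i)) hcc' hx hx'
  set b := minDist (idealImage ρ σ (p ^ (i₀ : ℕ)))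
  have hb : 0 < b ^ 2 := pow_pos (one_pos.trans_le
    (one_le_minDist_idealImage hemb (pow_ne_zero (i₀ : ℕ) hp0))) 2
  have hceil : minDist P ^ 2 ≤ codeMinDist (C i₀) * b ^ 2 := by
    rw [← div_le_iff₀ hb]
    exact (Nat.le_ceil _).trans (by exact_mod_cast hd i₀)
  have hcode : (codeMinDist (C i₀) : ℝ) ≤ hDist (c i₀) (c' i₀) := by
    exact_mod_cast codeMinDist_le_hDist (hc i₀) (hc' i₀) hne
  refine (sq_le_sq₀ (minDist_nonneg P) dist_nonneg).mp ?_
  calc minDist P ^ 2 ≤ codeMinDist (C i₀) * b ^ 2 := hceil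
    _ ≤ hDist (c i₀) (c' i₀) * b ^ 2 := by gcongr
    _ ≤ _ := hle

end Concatenation

theorem statement9_general {K : Type*} [Field K] [NumberField K] {s t : ℕ}
    (ρ : Fin s → (K →+* ℝ)) (σ : Fin t → (K →+* ℂ)) (hemb : IsEmbSystem ρ σ)
    (p : Ideal (NumberField.RingOfIntegers K)) (hp0 : p ≠ ⊥)
    (q : ℕ) (ℓ : ℕ) {n : ℕ}
    (S : ℕ → Set (NumberField.RingOfIntegers K)) (hS : ∀ i : Fin ℓ, IsRepSet p i q (S i))
    (M d : Fin ℓ → ℕ) (C : Fin ℓ → Set (Fin n → NumberField.RingOfIntegers K))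
    (hC : ∀ i : Fin ℓ, IsCode (S i) (M i) (d i) (C i))
    (h0C : ∀ i : Fin ℓ, (fun _ => (0 : NumberField.RingOfIntegers K)) ∈ C i)
    (P : Set (EuclideanSpace ℝ (Fin n × PackIdx s t)))
    (hP : P ⊆ prodSet n (idealImage ρ σ (p ^ ℓ)))
    (hd : ∀ i : Fin ℓ,
      ⌈(minDist P) ^ 2 / (minDist (idealImage ρ σ (p ^ (i : ℕ)))) ^ 2⌉₊ ≤ d i) :
    packDensity P * ∏ i : Fin ℓ, (M i : ℝ) ≤ packDensity (famTranslate ρ σ C P) := by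
  have hSsub (i : Fin ℓ) := (hS i).1
  have hSsep (i : Fin ℓ) := (hS i).2.2.2.1
  have hcS (c : Set.univ.pi C) (i : Fin ℓ) j : c.1 i j ∈ S i := (hC i).1 _ (c.2 i trivial) j
  have hM (i : Fin ℓ) : Nat.card (C i) = M i := (hC i).2.1
  have key := packDensity_mul_card_le (Q := famTranslate ρ σ C P)
    (fun c : Set.univ.pi C => ∑ i, tauEmbIntN ρ σ n (c.1 i))
    (fun c x hx => ⟨c.1, fun i => c.2 i trivial, x, hx, rfl⟩)
    (fun c c' x hx x' hx' h => by
      obtain ⟨hcc', rfl⟩ := eq_and_eq_of_sum_tauEmbIntN_add_eq hemb.2 hSsub hSsep hP hp0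
        (hcS c) (hcS c') hx hx' h
      exact ⟨Subtype.ext hcc', rfl⟩)
    (minDist_le_minDist (subset_famTranslate h0C) fun _ hz _ hz' =>
      minDist_le_dist_of_mem_famTranslate hemb.2 hSsub hSsep hP hp0 (fun i => (hC i).1)
        (fun i => (hC i).2.2 ▸ hd i) hz hz')
    (fun R => (finite_range_tauEmbIntN_inter_closedBall hemb.2 n R).subset
      (Set.inter_subset_inter_left _ (famTranslate_subset_range hP C)))
  rwa [Nat.card_congr (Equiv.Set.univPi C), Nat.card_pi, Nat.cast_prod,
    Finset.prod_congr rfl fun i _ => congrArg Nat.cast (hM i)] at key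

/-- Concatenation with a family of codes: if each `C_i` has minimum Hamming
distance at least `⌈d_E(P)²/d_E(L_i)²⌉`, then `Δ(τ(𝒞)+P) ≥ Δ(P)·∏ M_i`. -/
theorem statement9 {K : Type*} [Field K] [NumberField K] {s t m : ℕ}
    (ρ : Fin s → (K →+* ℝ)) (σ : Fin t → (K →+* ℂ)) (hemb : IsEmbSystem ρ σ)
    (hm : m = s + 2 * t)
    (p : Ideal (NumberField.RingOfIntegers K)) (hp : p.IsPrime) (hp0 : p ≠ ⊥)
    (q : ℕ) (hq : Ideal.absNorm p = q) (ℓ : ℕ) (hℓ : 1 ≤ ℓ) {n : ℕ}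
    (S : ℕ → Set (NumberField.RingOfIntegers K)) (hS : ∀ i : Fin ℓ, IsRepSet p i q (S i))
    (M d : Fin ℓ → ℕ) (C : Fin ℓ → Set (Fin n → NumberField.RingOfIntegers K))
    (hC : ∀ i : Fin ℓ, IsCode (S i) (M i) (d i) (C i))
    (h0C : ∀ i : Fin ℓ, (fun _ => (0 : NumberField.RingOfIntegers K)) ∈ C i)
    (P : Set (EuclideanSpace ℝ (Fin n × PackIdx s t)))
    (hP : P ⊆ prodSet n (idealImage ρ σ (p ^ ℓ)))
    (hd : ∀ i : Fin ℓ,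
      ⌈(minDist P) ^ 2 / (minDist (idealImage ρ σ (p ^ (i : ℕ)))) ^ 2⌉₊ ≤ d i) :
    packDensity P * ∏ i : Fin ℓ, (M i : ℝ) ≤ packDensity (famTranslate ρ σ C P) :=
  statement9_general ρ σ hemb p hp0 q ℓ S hS M d C hC h0C P hP hd
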